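/- arXiv:1807.07461 — 2 statements merged into one kernel-verified Lean document; each statement's English description precedes it below -/
import Mathlib

section
/- Let 0 < w_max < v_min ≤ v_max be real numbers and let ρ_min be a real number with ρ_min > (v_max − w_max)/(2·v_max − w_max). Define μ = ((2·v_min − w_max)/2)·(ρ_min − (v_max − w_max)/(2·v_max − w_max)). Then for every z with v_min ≤ z ≤ v_max and every pair of states ρ_l, ρ_r with ρ_min ≤ ρ_l ≤ 1 and ρ_min ≤ ρ_r ≤ 1, one has w_max·(1 − ρ_l) > z·(1 − ρ_l − ρ_r) + μ and w_max·(1 − ρ_r) > z·(1 − ρ_l − ρ_r) + μ. -/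
lemma aux_key (w_max v_min v_max ρ_min μ : ℝ)
    (hw : 0 < w_max) (hwv : w_max < v_min) (hv : v_min ≤ v_max)
    (hρ : ρ_min > (v_max - w_max) / (2 * v_max - w_max))
    (hμ : μ = (2 * v_min - w_max) / 2 *
      (ρ_min - (v_max - w_max) / (2 * v_max - w_max)))
    (z : ℝ) (hz1 : v_min ≤ z) (hz2 : z ≤ v_max)
    (ρl ρr : ℝ) (h1 : ρ_min ≤ ρl) (h2 : ρl ≤ 1) (h3 : ρ_min ≤ ρr) (h4 : ρr ≤ 1) :
    w_max * (1 - ρl) > z * (1 - ρl - ρr) + μ := by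
  have hD : (0:ℝ) < 2 * v_max - w_max := by linarith
  set r : ℝ := (v_max - w_max) / (2 * v_max - w_max) with hrdef
  have hr : r * (2 * v_max - w_max) = v_max - w_max := div_mul_cancel₀ _ (ne_of_gt hD)
  have hrρ : r < ρ_min := hρ
  -- Step 1: monotonicity in ρl, ρr
  have step1 : w_max * (1 - ρl) - z * (1 - ρl - ρr)
      ≥ w_max - z + ρ_min * (2 * z - w_max) := by
    nlinarith [mul_nonneg (by linarith : (0:ℝ) ≤ z - w_max) (by linarith : (0:ℝ) ≤ ρl - ρ_min),
      mul_nonneg (by linarith : (0:ℝ) ≤ z) (by linarith : (0:ℝ) ≤ ρr - ρ_min)]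
  -- Step 2: endpoint values exceed μ
  have hvmax : w_max - v_max + ρ_min * (2 * v_max - w_max) > μ := by
    have key : w_max - v_max + ρ_min * (2 * v_max - w_max)
        = (2 * v_max - w_max) * (ρ_min - r) := by
      linear_combination hr
    rw [key, hμ]
    have : (2 * v_min - w_max) / 2 < 2 * v_max - w_max := by linarith
    nlinarith [mul_pos (by linarith : (0:ℝ) < ρ_min - r) (by linarith : (0:ℝ) < 2 * v_max - w_max - (2 * v_min - w_max) / 2)]
  have hvmin : w_max - v_min + ρ_min * (2 * v_min - w_max) > μ := by
    have hQD : (w_max - v_min + (2 * v_min - w_max) * r) * (2 * v_max - w_max)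
        = w_max * (v_max - v_min) := by
      linear_combination (2 * v_min - w_max) * hr
    have hQ : 0 ≤ w_max - v_min + (2 * v_min - w_max) * r := by
      nlinarith [mul_nonneg hw.le (by linarith : (0:ℝ) ≤ v_max - v_min)]
    rw [hμ]
    nlinarith [mul_pos (by linarith : (0:ℝ) < ρ_min - r) (by linarith : (0:ℝ) < 2 * v_min - w_max)]
  -- Step 3: affine in z, so min at endpoint
  have step3 : w_max - z + ρ_min * (2 * z - w_max) > μ := by
    rcases le_or_gt (2 * ρ_min - 1) 0 with hc | hc
    · nlinarith [mul_nonneg (by linarith : (0:ℝ) ≤ 1 - 2 * ρ_min) (by linarith : (0:ℝ) ≤ v_max - z)]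
    · nlinarith [mul_nonneg hc.le (by linarith : (0:ℝ) ≤ z - v_min)]
  linarith

theorem stmt_0 (w_max v_min v_max ρ_min μ : ℝ)
    (hw : 0 < w_max) (hwv : w_max < v_min) (hv : v_min ≤ v_max)
    (hρ : ρ_min > (v_max - w_max) / (2 * v_max - w_max))
    (hμ : μ = (2 * v_min - w_max) / 2 *
      (ρ_min - (v_max - w_max) / (2 * v_max - w_max))) :
    ∀ z, v_min ≤ z → z ≤ v_max →
    ∀ ρl ρr : ℝ, ρ_min ≤ ρl → ρl ≤ 1 → ρ_min ≤ ρr → ρr ≤ 1 →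
      w_max * (1 - ρl) > z * (1 - ρl - ρr) + μ ∧
      w_max * (1 - ρr) > z * (1 - ρl - ρr) + μ := by
  intro z hz1 hz2 ρl ρr h1 h2 h3 h4
  refine ⟨aux_key w_max v_min v_max ρ_min μ hw hwv hv hρ hμ z hz1 hz2 ρl ρr h1 h2 h3 h4, ?_⟩
  have := aux_key w_max v_min v_max ρ_min μ hw hwv hv hρ hμ z hz1 hz2 ρr ρl h3 h4 h1 h2
  linarith [this]
end

section
/- Let λ₁, λ₂, λ₃, Δρ₁, Δρ₂, Δρ₃, ξ₁, ξ₂ be real numbers with λ₁ ≠ λ₂, Δρ₃ = Δρ₁ + Δρ₂, and Δρ₃·λ₃ = Δρ₁·λ₁ + Δρ₂·λ₂. Define ξ₃ = ((λ₃ − λ₂)/(λ₁ − λ₂))·ξ₁ + ((λ₁ − λ₃)/(λ₁ − λ₂))·ξ₂. Then Δρ₃·ξ₃ = Δρ₁·ξ₁ + Δρ₂·ξ₂. -/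
theorem stmt_6 (lam₁ lam₂ lam₃ Δρ₁ Δρ₂ Δρ₃ ξ₁ ξ₂ ξ₃ : ℝ)
    (hne : lam₁ ≠ lam₂)
    (hmass : Δρ₃ = Δρ₁ + Δρ₂)
    (hflux : Δρ₃ * lam₃ = Δρ₁ * lam₁ + Δρ₂ * lam₂)
    (hξ : ξ₃ = (lam₃ - lam₂) / (lam₁ - lam₂) * ξ₁ + (lam₁ - lam₃) / (lam₁ - lam₂) * ξ₂) :
    Δρ₃ * ξ₃ = Δρ₁ * ξ₁ + Δρ₂ * ξ₂ := by
  have h : lam₁ - lam₂ ≠ 0 := sub_ne_zero.mpr hne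
  subst hξ hmass
  field_simp
  linear_combination (ξ₁ - ξ₂) * hflux
end
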